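/- Let N ≥ 1 and let A be an N-by-N integer matrix with det(A) ≠ 0, viewed as a real matrix. Let ρ(A) denote its spectral radius (the maximum absolute value of its complex eigenvalues) and let D be the function D(B) = Σ_{j=1}^N max⁺{−b_{ij} : 1 ≤ i ≤ N} + max⁺{Σ_{j=1}^N b_{ij} : 1 ≤ i ≤ N}, where max⁺(S) = max(0, max S). Then ρ(A) ≥ ((2^{1/N} − 1)/(2N²)) · min_{0 ≤ k ≤ N−1} ( D(A^{k+1}) / D(A^k) ). (By the Hasselblatt–Propp formulas ρ(A) = δ(φ_A) and D(A^k) = deg(φ_A^k), this says the dynamical degree of the monomial map φ_A satisfies δ(φ_A) ≥ ((2^{1/N} − 1)/(2N²))·min_{0 ≤ k ≤ N−1} deg(φ_A^{k+1})/deg(φ_A^k).) -/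

import Mathlib

/-- `max⁺` of a finite family of reals: `max(0, max S)`. -/
noncomputable def maxPlus {N : ℕ} (f : Fin N → ℝ) : ℝ :=
  Finset.univ.fold max 0 f

/-- Hasselblatt–Propp degree function
`D(B) = Σ_j max⁺{−b_{ij} : i} + max⁺{Σ_j b_{ij} : i}`, so that for an integer
matrix `B` with `det B ≠ 0`, `D(B)` is the degree of the monomial map `φ_B`. -/
noncomputable def Dfun {N : ℕ} (B : Matrix (Fin N) (Fin N) ℝ) : ℝ :=
  (∑ j : Fin N, maxPlus fun i : Fin N => -B i j) +
    maxPlus fun i : Fin N => ∑ j : Fin N, B i j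

/-- The spectral radius of a complex matrix: the maximum absolute value of its
eigenvalues, i.e. of the roots of its characteristic polynomial. -/
noncomputable def specRad {N : ℕ} (A : Matrix (Fin N) (Fin N) ℂ) : ℝ :=
  (A.charpoly.roots.map (fun z : ℂ => ‖z‖)).fold max 0

/-!
Every entry of a matrix `B` is bounded by `D(B)` in absolute value, while `D(B) ≤ 2N · max |b_ij|`.
By Cayley–Hamilton, `A^N = -∑_{k<N} p_k A^k`, and the coefficients of the characteristic
polynomial satisfy `|p_k| ≤ C(N,k) ρ^{N-k}`. If `r` is the minimal ratio `D(A^{k+1})/D(A^k)`,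
then `r^{N-k} D(A^k) ≤ D(A^N)`, so `D(A^N) ≤ 2N((1 + ρ/r)^N - 1) D(A^N)`. Convexity of `x ↦ x^N`
turns `1 ≤ 2N((1 + ρ/r)^N - 1)` into `ρ/r ≥ (2^{1/N} - 1)/(2N²)`.
-/

open Finset Polynomial

namespace Multiset

variable {α : Type*} [LinearOrder α]

theorem le_fold_max_init (b : α) (s : Multiset α) : b ≤ s.fold max b := by
  induction s using Multiset.induction_on with
  | empty => simp
  | cons a s ih => exact ih.trans (by rw [fold_cons_left]; exact le_max_right _ _)

theorem le_fold_max_of_mem {a : α} (b : α) {s : Multiset α} (h : a ∈ s) : a ≤ s.fold max b := by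
  induction s using Multiset.induction_on with
  | empty => simp at h
  | cons c s ih =>
    rw [fold_cons_left]
    rcases mem_cons.mp h with rfl | h
    · exact le_max_left _ _
    · exact (ih h).trans (le_max_right _ _)

end Multiset

theorem specRad_nonneg {N : ℕ} (A : Matrix (Fin N) (Fin N) ℂ) : 0 ≤ specRad A :=
  Multiset.le_fold_max_init _ _

theorem norm_le_specRad {N : ℕ} (A : Matrix (Fin N) (Fin N) ℂ) {z : ℂ}
    (hz : z ∈ A.charpoly.roots) : ‖z‖ ≤ specRad A :=
  Multiset.le_fold_max_of_mem _ (Multiset.mem_map_of_mem _ hz)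

section Dfun

variable {N : ℕ}

theorem maxPlus_nonneg (f : Fin N → ℝ) : 0 ≤ maxPlus f :=
  (Finset.le_fold_max 0).mpr (Or.inl le_rfl)

theorem le_maxPlus (f : Fin N → ℝ) (i : Fin N) : f i ≤ maxPlus f :=
  (Finset.le_fold_max (f i)).mpr (Or.inr ⟨i, mem_univ i, le_rfl⟩)

theorem maxPlus_le {f : Fin N → ℝ} {c : ℝ} (hc : 0 ≤ c) (h : ∀ i, f i ≤ c) : maxPlus f ≤ c :=
  (Finset.fold_max_le c).mpr ⟨hc, fun i _ => h i⟩

variable (B : Matrix (Fin N) (Fin N) ℝ)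

theorem Dfun_nonneg : 0 ≤ Dfun B :=
  add_nonneg (sum_nonneg fun _ _ => maxPlus_nonneg _) (maxPlus_nonneg _)

theorem neg_apply_le_Dfun (i j : Fin N) : -B i j ≤ Dfun B := by
  have hcol : -B i j ≤ ∑ j', maxPlus fun i' => -B i' j' :=
    (le_maxPlus (fun i' => -B i' j) i).trans
      (single_le_sum (f := fun j' => maxPlus fun i' => -B i' j')
        (fun _ _ => maxPlus_nonneg _) (mem_univ j))
  exact hcol.trans (le_add_of_nonneg_right (maxPlus_nonneg _))

theorem apply_le_Dfun (i j : Fin N) : B i j ≤ Dfun B := by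
  have hrow : ∑ j', B i j' ≤ maxPlus fun i' => ∑ j', B i' j' :=
    le_maxPlus (fun i' => ∑ j', B i' j') i
  have hcols : ∑ j' ∈ univ.erase j, -B i j' ≤ ∑ j', maxPlus fun i' => -B i' j' :=
    (sum_le_sum fun j' _ => le_maxPlus (fun i' => -B i' j') i).trans
      (sum_le_sum_of_subset_of_nonneg (subset_univ _) fun _ _ _ => maxPlus_nonneg _)
  have hsplit : B i j = ∑ j', B i j' + ∑ j' ∈ univ.erase j, -B i j' := by
    rw [← add_sum_erase _ _ (mem_univ j), sum_neg_distrib]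
    ring
  rw [hsplit, Dfun]
  linarith

theorem abs_apply_le_Dfun (i j : Fin N) : |B i j| ≤ Dfun B :=
  abs_le.mpr ⟨neg_le.mp (neg_apply_le_Dfun B i j), apply_le_Dfun B i j⟩

theorem Dfun_pos {B : Matrix (Fin N) (Fin N) ℝ} (hB : B ≠ 0) : 0 < Dfun B := by
  obtain ⟨i, j, hij⟩ : ∃ i j, B i j ≠ 0 := by
    by_contra! h
    exact hB (Matrix.ext h)
  exact (abs_pos.mpr hij).trans_le (abs_apply_le_Dfun B i j)

theorem Dfun_le_of_abs_apply_le {M : ℝ} (hM : 0 ≤ M) (h : ∀ i j, |B i j| ≤ M) :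
    Dfun B ≤ 2 * N * M := by
  have hcol : ∀ j, maxPlus (fun i => -B i j) ≤ M := fun j =>
    maxPlus_le hM fun i => (neg_le_abs _).trans (h i j)
  have hrow : maxPlus (fun i => ∑ j, B i j) ≤ N * M :=
    maxPlus_le (by positivity) fun i => by
      simpa using sum_le_sum fun j (_ : j ∈ univ) => (le_abs_self _).trans (h i j)
  calc Dfun B ≤ ∑ _j : Fin N, M + N * M := add_le_add (sum_le_sum fun j _ => hcol j) hrow
    _ = 2 * N * M := by
      rw [sum_const, card_univ, Fintype.card_fin, nsmul_eq_mul]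
      ring

theorem Dfun_pow_le_sum_charpoly_coeff :
    Dfun (B ^ N) ≤ 2 * N * ∑ k ∈ range N, |B.charpoly.coeff k| * Dfun (B ^ k) := by
  have hCH : B ^ N = -∑ k ∈ range N, B.charpoly.coeff k • B ^ k := by
    have hlead : B.charpoly.coeff N = 1 := by
      simpa [Matrix.charpoly_natDegree_eq_dim] using B.charpoly_monic.coeff_natDegree
    have h := B.aeval_self_charpoly
    rw [aeval_eq_sum_range, Matrix.charpoly_natDegree_eq_dim, Fintype.card_fin,
      sum_range_succ, hlead, one_smul] at h
    exact eq_neg_of_add_eq_zero_right h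
  refine Dfun_le_of_abs_apply_le _
    (sum_nonneg fun k _ => mul_nonneg (abs_nonneg _) (Dfun_nonneg _)) fun i j => ?_
  rw [hCH, Matrix.neg_apply, abs_neg, Matrix.sum_apply]
  refine (abs_sum_le_sum_abs _ _).trans (sum_le_sum fun k _ => ?_)
  rw [Matrix.smul_apply, smul_eq_mul, abs_mul]
  exact mul_le_mul_of_nonneg_left (abs_apply_le_Dfun _ i j) (abs_nonneg _)

end Dfun

theorem pow_sub_mul_le_of_mul_le_succ {f : ℕ → ℝ} {r : ℝ} (hr : 0 ≤ r) {n : ℕ}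
    (h : ∀ k < n, r * f k ≤ f (k + 1)) {k : ℕ} (hk : k ≤ n) : r ^ (n - k) * f k ≤ f n := by
  induction n with
  | zero => simp [Nat.le_zero.mp hk]
  | succ n ih =>
    rcases hk.eq_or_lt with rfl | hk
    · simp
    calc r ^ (n + 1 - k) * f k = r * (r ^ (n - k) * f k) := by
          rw [Nat.sub_add_comm (Nat.le_of_lt_succ hk), pow_succ]; ring
      _ ≤ r * f n :=
          mul_le_mul_of_nonneg_left (ih (fun k hk => h k (by omega)) (by omega)) hr
      _ ≤ f (n + 1) := h n n.lt_succ_self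

theorem sum_range_mul_pow_sub_choose {R : Type*} [CommSemiring R] (x : R) (n : ℕ) :
    ∑ k ∈ range n, x ^ (n - k) * n.choose k + 1 = (1 + x) ^ n := by
  rw [add_pow, sum_range_succ]
  simp

theorem one_add_mul_pow_le {u s : ℝ} (hu : 0 ≤ u) (hs0 : 0 ≤ s) (hs1 : s ≤ 1) (n : ℕ) :
    (1 + u * s) ^ n ≤ 1 + s * ((1 + u) ^ n - 1) := by
  have h := (convexOn_pow n).2 (Set.mem_Ici.mpr zero_le_one)
    (Set.mem_Ici.mpr (by linarith : (0 : ℝ) ≤ 1 + u)) (by linarith : 0 ≤ 1 - s) hs0 (by ring)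
  simp only [smul_eq_mul, one_pow, mul_one] at h
  calc (1 + u * s) ^ n = ((1 - s) + s * (1 + u)) ^ n := by ring
    _ ≤ (1 - s) + s * (1 + u) ^ n := h
    _ = 1 + s * ((1 + u) ^ n - 1) := by ring

theorem le_of_one_le_mul_one_add_pow_sub_one {N : ℕ} (hN : 1 ≤ N) {t : ℝ} (ht : 0 ≤ t)
    (h : 1 ≤ 2 * N * ((1 + t) ^ N - 1)) :
    ((2 : ℝ) ^ ((1 : ℝ) / N) - 1) / (2 * (N : ℝ) ^ 2) ≤ t := by
  have hN' : (1 : ℝ) ≤ N := by exact_mod_cast hN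
  set u : ℝ := (2 : ℝ) ^ ((1 : ℝ) / N) - 1
  set s : ℝ := 1 / (2 * (N : ℝ) ^ 2)
  have hu : 0 ≤ u := sub_nonneg.mpr (Real.one_le_rpow (by norm_num) (by positivity))
  have hs1 : s ≤ 1 := by
    rw [div_le_one (by positivity)]
    nlinarith
  have hpow : (1 + u) ^ N = 2 := by
    rw [add_sub_cancel, ← Real.rpow_natCast, ← Real.rpow_mul zero_le_two,
      one_div_mul_cancel (by positivity), Real.rpow_one]
  have hs : s ≤ (1 + t) ^ N - 1 := by
    have : s * (2 * N) ≤ 1 := by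
      rw [div_mul_eq_mul_div, one_mul, div_le_one (by positivity)]
      nlinarith
    nlinarith
  have hlt : (1 + u * s) ^ N ≤ (1 + t) ^ N := by
    have := one_add_mul_pow_le hu (by positivity) hs1 N
    rw [hpow] at this
    linarith
  have := (pow_le_pow_iff_left₀ (by positivity) (by linarith) (by omega)).mp hlt
  rw [div_eq_mul_one_div]
  linarith

theorem Dfun_pow_le_of_growth {N : ℕ} (B : Matrix (Fin N) (Fin N) ℝ) {r ρ : ℝ} (hr : 0 < r)
    (hρ : 0 ≤ ρ) (hgrowth : ∀ k < N, r * Dfun (B ^ k) ≤ Dfun (B ^ (k + 1)))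
    (hroots : ∀ z ∈ (B.map (algebraMap ℝ ℂ)).charpoly.roots, ‖z‖ ≤ ρ) :
    Dfun (B ^ N) ≤ 2 * N * ((1 + ρ / r) ^ N - 1) * Dfun (B ^ N) := by
  have hcoeff (k : ℕ) : |B.charpoly.coeff k| ≤ ρ ^ (N - k) * N.choose k := by
    have := coeff_le_of_roots_le (f := algebraMap ℝ ℂ) k B.charpoly_monic (IsAlgClosed.splits _)
      (by rwa [← Matrix.charpoly_map])
    simpa [Matrix.charpoly_natDegree_eq_dim] using this
  have hterm : ∀ k ∈ range N, |B.charpoly.coeff k| * Dfun (B ^ k) ≤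
      (ρ / r) ^ (N - k) * N.choose k * Dfun (B ^ N) := by
    intro k hk
    have hchain := pow_sub_mul_le_of_mul_le_succ hr.le hgrowth (mem_range.mp hk).le
    calc |B.charpoly.coeff k| * Dfun (B ^ k) ≤ ρ ^ (N - k) * N.choose k * Dfun (B ^ k) :=
          mul_le_mul_of_nonneg_right (hcoeff k) (Dfun_nonneg _)
      _ = (ρ / r) ^ (N - k) * N.choose k * (r ^ (N - k) * Dfun (B ^ k)) := by
          rw [div_pow]; field_simp
      _ ≤ (ρ / r) ^ (N - k) * N.choose k * Dfun (B ^ N) := by gcongr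
  calc Dfun (B ^ N) ≤ 2 * N * ∑ k ∈ range N, |B.charpoly.coeff k| * Dfun (B ^ k) :=
        Dfun_pow_le_sum_charpoly_coeff B
    _ ≤ 2 * N * ∑ k ∈ range N, (ρ / r) ^ (N - k) * N.choose k * Dfun (B ^ N) := by
        gcongr 2 * N * ?_
        exact sum_le_sum hterm
    _ = 2 * N * ((1 + ρ / r) ^ N - 1) * Dfun (B ^ N) := by
        rw [← sum_mul, ← sum_range_mul_pow_sub_choose]; ring

/-- Let `A` be an `N×N` integer matrix (`N ≥ 1`) with
`det(A) ≠ 0`.  Then the spectral radius of `A` satisfies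
`ρ(A) ≥ ((2^{1/N} − 1)/(2N²)) · min_{0 ≤ k ≤ N−1} D(A^{k+1})/D(A^k)`.
(By Hasselblatt–Propp this says
`δ(φ_A) ≥ ((2^{1/N} − 1)/(2N²)) · min_k deg(φ_A^{k+1})/deg(φ_A^k)`.) -/
theorem statement13 (N : ℕ) (hN : 1 ≤ N) (A : Matrix (Fin N) (Fin N) ℤ)
    (hdet : A.det ≠ 0) :
    (((2 : ℝ) ^ ((1 : ℝ) / N) - 1) / (2 * (N : ℝ) ^ 2)) *
        (Finset.range N).inf' (Finset.nonempty_range_iff.mpr (by omega))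
          (fun k => Dfun ((A ^ (k + 1)).map (Int.cast : ℤ → ℝ)) /
            Dfun ((A ^ k).map (Int.cast : ℤ → ℝ))) ≤
      specRad (A.map (Int.cast : ℤ → ℂ)) := by
  set B : Matrix (Fin N) (Fin N) ℝ := A.map (Int.cast : ℤ → ℝ)
  have hpow (k : ℕ) : (A ^ k).map (Int.cast : ℤ → ℝ) = B ^ k :=
    Matrix.map_pow A (Int.castRingHom ℝ) k
  simp only [hpow]
  have hD (k : ℕ) : 0 < Dfun (B ^ k) := by
    have : Nonempty (Fin N) := ⟨⟨0, hN⟩⟩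
    refine Dfun_pos fun h => hdet ?_
    have hdetB := congrArg Matrix.det h
    rw [Matrix.det_pow, Matrix.det_zero, ← Int.cast_det] at hdetB
    exact_mod_cast eq_zero_of_pow_eq_zero hdetB
  set r := (range N).inf' (nonempty_range_iff.mpr (by omega))
    fun k => Dfun (B ^ (k + 1)) / Dfun (B ^ k)
  have hr : 0 < r := (lt_inf'_iff _).mpr fun k _ => div_pos (hD _) (hD _)
  have hgrowth : ∀ k < N, r * Dfun (B ^ k) ≤ Dfun (B ^ (k + 1)) := fun k hk =>
    (le_div_iff₀ (hD k)).mp (inf'_le _ (mem_range.mpr hk))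
  have hcomplex : A.map (Int.cast : ℤ → ℂ) = B.map (algebraMap ℝ ℂ) := by ext; simp [B]
  have hkey := Dfun_pow_le_of_growth B hr (specRad_nonneg (A.map (Int.cast : ℤ → ℂ))) hgrowth
    fun z hz => norm_le_specRad _ (hcomplex ▸ hz)
  have hbound := le_of_one_le_mul_one_add_pow_sub_one hN
    (div_nonneg (specRad_nonneg _) hr.le)
    (le_of_mul_le_mul_right (by rwa [one_mul]) (hD N))
  exact (le_div_iff₀ hr).mp hbound
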